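/- Let C0 ≥ 1, h ≥ 0, t ∈ ℝ, u = it + h, and let X_1,…,X_n be 1-dependent random variables taking values in the nonnegative integers with X_i ≤ C0 almost surely. Set a = e^{hC0}(2+h)√C0, Γ_1 = Σ_{k=1}^n ν_1(k), and assume a²·max_{1≤j≤n} ν_1(j) ≤ 1/100. Then the series A(u) = Σ_{k=1}^n Σ_{j=1}^∞ (−1)^{j+1}(φ_k(u) − 1)^j / j converges absolutely and |A(u)| ≤ 4a²Γ_1. -/

import Mathlib

open MeasureTheory ProbabilityTheory Filter Finset
open scoped BigOperators

/-- `m`-th factorial moment `ν_m = E[X(X-1)⋯(X-m+1)]` of a ℕ-valued random variable. -/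
noncomputable def facMoment {Ω : Type*} [MeasurableSpace Ω] (μ : Measure Ω)
    (X : Ω → ℕ) (m : ℕ) : ℝ :=
  ∫ ω, (Nat.descFactorial (X ω) m : ℝ) ∂μ

/-- `X 1, …, X n` is a 1-dependent sequence: for `1 ≤ r ≤ n - 2` the σ-algebra
generated by `X 1, …, X r` is independent of the one generated by `X (r+2), …, X n`. -/
def OneDependent {Ω : Type*} [MeasurableSpace Ω] (μ : Measure Ω) (n : ℕ)
    (X : ℕ → Ω → ℕ) : Prop :=
  ∀ r : ℕ, 1 ≤ r → r + 2 ≤ n →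
    Indep (⨆ i ∈ Finset.Icc 1 r, MeasurableSpace.comap (X i) ⊤)
          (⨆ i ∈ Finset.Icc (r + 2) n, MeasurableSpace.comap (X i) ⊤) μ

/-- Heinrich's cumulant functional `Ê(U_j, …, U_k)`, defined recursively by
`Ê(U_j) = E U_j` and
`Ê(U_j,…,U_k) = E[U_j⋯U_k] - Σ_{l=j}^{k-1} Ê(U_j,…,U_l)·E[U_{l+1}⋯U_k]`. -/
noncomputable def heinrichE {Ω : Type*} [MeasurableSpace Ω] (μ : Measure Ω)
    (U : ℕ → Ω → ℂ) (j : ℕ) (k : ℕ) : ℂ :=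
  (∫ ω, ∏ i ∈ Finset.Icc j k, U i ω ∂μ)
    - ∑ l ∈ (Finset.Ico j k).attach,
        heinrichE μ U j l.1 * ∫ ω, ∏ i ∈ Finset.Icc (l.1 + 1) k, U i ω ∂μ
termination_by k
decreasing_by exact (Finset.mem_Ico.mp l.2).2

/-- Heinrich's functions `φ_k(u)`: `φ_1(u) = E e^{uX_1}` and, for `k ≥ 2`,
`φ_k(u) = 1 + E Y_k + Σ_{j=1}^{k-1} Ψ_{jk} / (φ_j(u)⋯φ_{k-1}(u))`, where
`Y_j = e^{uX_j} - 1` and `Ψ_{jk} = Ê(Y_j,…,Y_k)`. -/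
noncomputable def heinrichPhi {Ω : Type*} [MeasurableSpace Ω] (μ : Measure Ω)
    (X : ℕ → Ω → ℕ) (u : ℂ) : ℕ → ℂ
  | 0 => 1
  | 1 => ∫ ω, Complex.exp (u * (X 1 ω : ℂ)) ∂μ
  | k + 2 =>
      1 + (∫ ω, (Complex.exp (u * (X (k + 2) ω : ℂ)) - 1) ∂μ)
        + ∑ j ∈ (Finset.Icc 1 (k + 1)).attach,
            heinrichE μ (fun i ω => Complex.exp (u * (X i ω : ℂ)) - 1) j.1 (k + 2) /
              ∏ i ∈ (Finset.Icc j.1 (k + 1)).attach, heinrichPhi μ X u i.1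
termination_by k => k
decreasing_by
  exact lt_of_le_of_lt (Finset.mem_Icc.mp i.2).2 (Nat.lt_succ_self _)

/-!
Write `Y_i = e^{uX_i} - 1` and `b = e^{hC₀}(2 + h)`, so that `a² = b²C₀`. For an integer
`0 ≤ m ≤ C₀` one has `|e^{um} - 1| ≤ bm`, hence `E|Y_i| ≤ bν_i` and
`E|Y_i|² ≤ b²C₀ν_i = d_i²` with `d_i = √(a²ν_i) ≤ 1/10`. In a block `Y_p⋯Y_q` the even-indexed
factors are mutually independent by 1-dependence, and so are the odd-indexed ones; Cauchy–Schwarz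
across the two halves gives `E|Y_p⋯Y_q| ≤ d_p⋯d_q`, and Heinrich's recursion turns this into
`|Ψ_{jk}| ≤ 2^{k-j} d_j⋯d_k`. By induction on `k`, `|φ_k - 1|` is at most
`c_k = bν_k + Σ_{j<k} (21/10)^{k-j} d_j⋯d_k ≤ 1/25`, which keeps the denominators `|φ_i| ≥ 24/25`.
The logarithmic series at `φ_k - 1` is then at most `(25/24) c_k`, and
`d_j⋯d_k ≤ 10^{-(k-j-1)} (d_j² + d_k²)/2` makes `Σ_k c_k` a geometric series in `a²ν_i`.
-/

lemma sum_pow_le_div_one_sub {ι : Type*} {ρ : ℝ} (h0 : 0 ≤ ρ) (h1 : ρ < 1) {s : Finset ι}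
    {g : ι → ℕ} (hg : Set.InjOn g s) (hg1 : ∀ i ∈ s, 1 ≤ g i) :
    ∑ i ∈ s, ρ ^ g i ≤ ρ / (1 - ρ) := by
  classical
  rw [← sum_image hg]
  calc ∑ m ∈ s.image g, ρ ^ m ≤ ∑ m ∈ Ico 1 ((s.image g).sup id + 1), ρ ^ m := by
        refine sum_le_sum_of_subset_of_nonneg (fun m hm => ?_) fun _ _ _ => pow_nonneg h0 _
        obtain ⟨i, hi, rfl⟩ := mem_image.mp hm
        exact mem_Ico.mpr ⟨hg1 i hi, Nat.lt_succ_of_le (le_sup (f := id) hm)⟩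
    _ ≤ ρ ^ 1 / (1 - ρ) := geom_sum_Ico_le_of_lt_one h0 h1
    _ = ρ / (1 - ρ) := by rw [pow_one]

lemma pow_mul_prod_Icc_le_sq_add_sq {d : ℕ → ℝ} (hd0 : ∀ i, 0 ≤ d i) {j k : ℕ} (hjk : j < k)
    (hd : ∀ i ∈ Ioo j k, d i ≤ 1 / 10) :
    (21 / 10 : ℝ) ^ (k - j) * ∏ i ∈ Icc j k, d i ≤
      5 * (21 / 100 : ℝ) ^ (k - j) * (d j ^ 2 + d k ^ 2) := by
  obtain ⟨m, rfl⟩ : ∃ m, k = j + m + 1 := ⟨k - j - 1, by omega⟩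
  have hmid : ∏ i ∈ Ioo j (j + m + 1), d i ≤ (1 / 10) ^ m := by
    refine (prod_le_prod (fun i _ => hd0 i) hd).trans_eq ?_
    rw [prod_const, Nat.card_Ioo]
    congr 1
    omega
  rw [← mul_prod_Ioc_eq_prod_Icc (by omega), ← prod_Ioo_mul_eq_prod_Ioc (by omega),
    show j + m + 1 - j = m + 1 by omega, show (21 / 100 : ℝ) = 21 / 10 * (1 / 10) by norm_num,
    mul_pow, pow_succ (1 / 10 : ℝ)]
  have hAM : 2 * (d j * d (j + m + 1)) ≤ d j ^ 2 + d (j + m + 1) ^ 2 := by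
    nlinarith [sq_nonneg (d j - d (j + m + 1))]
  calc (21 / 10 : ℝ) ^ (m + 1) * (d j * ((∏ i ∈ Ioo j (j + m + 1), d i) * d (j + m + 1)))
      ≤ (21 / 10 : ℝ) ^ (m + 1) * (d j * ((1 / 10) ^ m * d (j + m + 1))) := by
        gcongr
        · exact hd0 _
        · exact hd0 _
    _ = (21 / 10 : ℝ) ^ (m + 1) * (1 / 10) ^ m * (d j * d (j + m + 1)) := by ring
    _ ≤ (21 / 10 : ℝ) ^ (m + 1) * (1 / 10) ^ m * ((d j ^ 2 + d (j + m + 1) ^ 2) / 2) := by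
        gcongr
        linarith
    _ = _ := by ring

lemma sum_sum_pow_sub_mul_add_le {ρ : ℝ} (h0 : 0 ≤ ρ) (h1 : ρ < 1) {x : ℕ → ℝ}
    (hx : ∀ i, 0 ≤ x i) (n : ℕ) :
    ∑ k ∈ Icc 1 n, ∑ j ∈ Ico 1 k, ρ ^ (k - j) * (x j + x k) ≤
      2 * (ρ / (1 - ρ)) * ∑ k ∈ Icc 1 n, x k := by
  have hswap : ∑ k ∈ Icc 1 n, ∑ j ∈ Ico 1 k, ρ ^ (k - j) * x j =
      ∑ j ∈ Icc 1 n, (∑ k ∈ Ioc j n, ρ ^ (k - j)) * x j := by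
    simp_rw [sum_mul]
    exact sum_comm' fun k j => by simp only [mem_Icc, mem_Ico, mem_Ioc]; omega
  have hleft : ∀ j, ∑ k ∈ Ioc j n, ρ ^ (k - j) ≤ ρ / (1 - ρ) := fun j =>
    sum_pow_le_div_one_sub h0 h1 (fun k hk l hl h => by simp at hk hl; omega)
      fun k hk => by simp at hk; omega
  have hright : ∀ k, ∑ j ∈ Ico 1 k, ρ ^ (k - j) ≤ ρ / (1 - ρ) := fun k =>
    sum_pow_le_div_one_sub h0 h1 (fun j hj l hl h => by simp at hj hl; omega)
      fun j hj => by simp at hj; omega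
  simp_rw [mul_add, sum_add_distrib, hswap, ← sum_mul]
  calc ∑ j ∈ Icc 1 n, (∑ k ∈ Ioc j n, ρ ^ (k - j)) * x j +
        ∑ k ∈ Icc 1 n, (∑ j ∈ Ico 1 k, ρ ^ (k - j)) * x k
      ≤ ∑ j ∈ Icc 1 n, ρ / (1 - ρ) * x j + ∑ k ∈ Icc 1 n, ρ / (1 - ρ) * x k := by
        gcongr with j _ k _
        · exact hx j
        · exact hleft j
        · exact hx k
        · exact hright k
    _ = 2 * (ρ / (1 - ρ)) * ∑ k ∈ Icc 1 n, x k := by rw [← mul_sum]; ring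

lemma norm_logSeries_term_le (z : ℂ) (j : ℕ) :
    ‖(-1 : ℂ) ^ j * z ^ (j + 1) / (j + 1)‖ ≤ ‖z‖ * ‖z‖ ^ j := by
  have h : ‖(-1 : ℂ) ^ j * z ^ (j + 1) / (j + 1)‖ = ‖z‖ ^ (j + 1) / (j + 1) := by
    simp only [norm_mul, norm_pow, norm_neg, norm_one, one_pow, one_mul, norm_div]
    norm_cast
  rw [h, ← pow_succ']
  exact div_le_self (by positivity) (by linarith [j.cast_nonneg (α := ℝ)])

lemma summable_norm_logSeries {z : ℂ} (hz : ‖z‖ < 1) :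
    Summable fun j : ℕ => ‖(-1 : ℂ) ^ j * z ^ (j + 1) / (j + 1)‖ :=
  .of_nonneg_of_le (fun _ => norm_nonneg _) (norm_logSeries_term_le z)
    ((summable_geometric_of_lt_one (norm_nonneg z) hz).mul_left _)

lemma norm_tsum_logSeries_le {z : ℂ} (hz : ‖z‖ < 1) :
    ‖∑' j : ℕ, (-1 : ℂ) ^ j * z ^ (j + 1) / (j + 1)‖ ≤ ‖z‖ / (1 - ‖z‖) := by
  have hgeom := summable_geometric_of_lt_one (norm_nonneg z) hz
  calc _ ≤ ∑' j : ℕ, ‖(-1 : ℂ) ^ j * z ^ (j + 1) / (j + 1)‖ :=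
        norm_tsum_le_tsum_norm (summable_norm_logSeries hz)
    _ ≤ ∑' j : ℕ, ‖z‖ * ‖z‖ ^ j :=
        (summable_norm_logSeries hz).tsum_le_tsum (norm_logSeries_term_le z) (hgeom.mul_left _)
    _ = ‖z‖ / (1 - ‖z‖) := by
        rw [tsum_mul_left, tsum_geometric_of_lt_one (norm_nonneg z) hz, div_eq_mul_inv]

lemma norm_cexp_mul_natCast_sub_one_le {t h C : ℝ} (hh : 0 ≤ h) {m : ℕ} (hm : (m : ℝ) ≤ C) :
    ‖Complex.exp ((t * Complex.I + h) * m) - 1‖ ≤ Real.exp (h * C) * (2 + h) * m := by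
  rcases Nat.eq_zero_or_pos m with rfl | hm1
  · simp
  have hre : ((t * Complex.I + h) * m).re = h * m := by simp
  have hexp : Real.exp (h * m) ≤ Real.exp (h * C) := Real.exp_le_exp.mpr (by gcongr)
  have hone : 1 ≤ Real.exp (h * C) := Real.one_le_exp (by nlinarith [(m.cast_nonneg : (0 : ℝ) ≤ m)])
  have hm1' : (1 : ℝ) ≤ m := by exact_mod_cast hm1
  calc _ ≤ ‖Complex.exp ((t * Complex.I + h) * m)‖ + ‖(1 : ℂ)‖ := norm_sub_le _ _
    _ = Real.exp (h * m) + 1 := by rw [Complex.norm_exp, hre, norm_one]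
    _ ≤ Real.exp (h * C) * (2 + h) * 1 := by nlinarith
    _ ≤ _ := by gcongr

section Moments

variable {Ω : Type*} [MeasurableSpace Ω] {μ : Measure Ω}

lemma integral_mul_le_sqrt_mul_sqrt {f g : Ω → ℝ} (hf0 : 0 ≤ᵐ[μ] f) (hg0 : 0 ≤ᵐ[μ] g)
    (hf : MemLp f 2 μ) (hg : MemLp g 2 μ) :
    ∫ ω, f ω * g ω ∂μ ≤ √(∫ ω, f ω ^ 2 ∂μ) * √(∫ ω, g ω ^ 2 ∂μ) := by
  have := integral_mul_le_Lp_mul_Lq_of_nonneg Real.HolderConjugate.two_two hf0 hg0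
    (by simpa using hf) (by simpa using hg)
  simpa [Real.sqrt_eq_rpow, Real.rpow_two] using this

lemma integral_prod_le_prod_of_integral_prod_sq_le [IsFiniteMeasure μ] {Z : ℕ → Ω → ℝ}
    {d : ℕ → ℝ} {T : Finset ℕ} (B : ℝ) (hZ : ∀ i ∈ T, AEStronglyMeasurable (Z i) μ)
    (hZ0 : ∀ i ω, 0 ≤ Z i ω) (hZB : ∀ i ∈ T, ∀ᵐ ω ∂μ, Z i ω ≤ B) (hd : ∀ i, 0 ≤ d i)
    (hsq : ∀ S ⊆ T, ((S : Set ℕ).Pairwise fun i j => i + 1 ≠ j) →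
      ∫ ω, ∏ i ∈ S, Z i ω ^ 2 ∂μ ≤ ∏ i ∈ S, d i ^ 2) :
    ∫ ω, ∏ i ∈ T, Z i ω ∂μ ≤ ∏ i ∈ T, d i := by
  have hmem : ∀ S ⊆ T, MemLp (fun ω => ∏ i ∈ S, Z i ω) 2 μ := by
    intro S hS
    refine MemLp.of_bound (Finset.aestronglyMeasurable_fun_prod _ fun i hi => hZ i (hS hi))
      (B ^ S.card) ?_
    filter_upwards [(eventually_all_finset _).2 fun i hi => hZB i (hS hi)] with ω hω
    rw [Real.norm_of_nonneg (prod_nonneg fun i _ => hZ0 i ω), ← prod_const]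
    exact prod_le_prod (fun i _ => hZ0 i ω) hω
  have hhalf : ∀ p : ℕ → Prop, [DecidablePred p] → (∀ i, p i → ¬p (i + 1)) →
      √(∫ ω, (∏ i ∈ T with p i, Z i ω) ^ 2 ∂μ) ≤ ∏ i ∈ T with p i, d i := by
    intro p _ hp
    rw [Real.sqrt_le_left (prod_nonneg fun i _ => hd i)]
    simp_rw [← prod_pow]
    refine hsq _ (filter_subset _ _) fun i hi j hj _ hij => ?_
    simp only [coe_filter, Set.mem_ofPred_eq] at hi hj
    exact hp i hi.2 (hij ▸ hj.2)
  calc ∫ ω, ∏ i ∈ T, Z i ω ∂μ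
      = ∫ ω, (∏ i ∈ T with Even i, Z i ω) * ∏ i ∈ T with ¬Even i, Z i ω ∂μ := by
        simp_rw [prod_filter_mul_prod_filter_not]
    _ ≤ (∏ i ∈ T with Even i, d i) * ∏ i ∈ T with ¬Even i, d i := by
        refine (integral_mul_le_sqrt_mul_sqrt (.of_forall fun ω => prod_nonneg fun i _ => hZ0 i ω)
          (.of_forall fun ω => prod_nonneg fun i _ => hZ0 i ω) (hmem _ (filter_subset _ _))
          (hmem _ (filter_subset _ _))).trans ?_
        exact mul_le_mul (hhalf _ fun i hi h => Nat.even_add_one.mp h hi)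
          (hhalf _ fun i hi h => h (Nat.even_add_one.mpr hi)) (Real.sqrt_nonneg _)
          (prod_nonneg fun i _ => hd i)
    _ = ∏ i ∈ T, d i := prod_filter_mul_prod_filter_not _ _ _

variable [IsFiniteMeasure μ] {Y : Ω → ℕ} {u : ℂ} {b C : ℝ}

lemma integrable_natCast_of_le (hY : Measurable Y) (hYC : ∀ᵐ ω ∂μ, (Y ω : ℝ) ≤ C) :
    Integrable (fun ω => (Y ω : ℝ)) μ :=
  .of_bound (measurable_from_nat.comp hY).aestronglyMeasurable C <|
    hYC.mono fun ω h => by rwa [Real.norm_natCast]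

lemma integrable_cexp_mul_natCast (hY : Measurable Y) (hYC : ∀ᵐ ω ∂μ, (Y ω : ℝ) ≤ C)
    (hb0 : 0 ≤ b) (hb : ∀ m : ℕ, (m : ℝ) ≤ C → ‖Complex.exp (u * m) - 1‖ ≤ b * m) :
    Integrable (fun ω => Complex.exp (u * Y ω)) μ := by
  have hsub : Integrable (fun ω => Complex.exp (u * Y ω) - 1) μ :=
    .of_bound ((measurable_from_nat (f := fun m : ℕ => Complex.exp (u * m) - 1)).comp
      hY).aestronglyMeasurable (b * C) <|
      hYC.mono fun ω h => (hb _ h).trans (by gcongr)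
  exact (hsub.add (integrable_const 1)).congr (.of_forall fun _ => sub_add_cancel _ _)

lemma integral_norm_cexp_mul_natCast_sub_one_le (hY : Measurable Y)
    (hYC : ∀ᵐ ω ∂μ, (Y ω : ℝ) ≤ C)
    (hb : ∀ m : ℕ, (m : ℝ) ≤ C → ‖Complex.exp (u * m) - 1‖ ≤ b * m) :
    ∫ ω, ‖Complex.exp (u * Y ω) - 1‖ ∂μ ≤ b * ∫ ω, (Y ω : ℝ) ∂μ := by
  rw [← integral_const_mul]
  exact integral_mono_of_nonneg (.of_forall fun _ => norm_nonneg _)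
    ((integrable_natCast_of_le hY hYC).const_mul b) (hYC.mono fun ω h => hb _ h)

lemma integral_norm_cexp_mul_natCast_sub_one_sq_le (hY : Measurable Y)
    (hYC : ∀ᵐ ω ∂μ, (Y ω : ℝ) ≤ C)
    (hb : ∀ m : ℕ, (m : ℝ) ≤ C → ‖Complex.exp (u * m) - 1‖ ≤ b * m) :
    ∫ ω, ‖Complex.exp (u * Y ω) - 1‖ ^ 2 ∂μ ≤ b ^ 2 * C * ∫ ω, (Y ω : ℝ) ∂μ := by
  rw [← integral_const_mul]
  refine integral_mono_of_nonneg (.of_forall fun _ => by positivity)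
    ((integrable_natCast_of_le hY hYC).const_mul _) (hYC.mono fun ω h => ?_)
  have hY0 : (0 : ℝ) ≤ Y ω := Nat.cast_nonneg _
  calc ‖Complex.exp (u * Y ω) - 1‖ ^ 2 ≤ (b * Y ω) ^ 2 :=
        pow_le_pow_left₀ (norm_nonneg _) (hb _ h) 2
    _ = b ^ 2 * (Y ω * Y ω) := by ring
    _ ≤ b ^ 2 * (C * Y ω) := by gcongr
    _ = _ := by ring

end Moments

section Heinrich

variable {Ω : Type*} [MeasurableSpace Ω] {μ : Measure Ω}

lemma norm_heinrichE_le (U : ℕ → Ω → ℂ) (d : ℕ → ℝ) (j k : ℕ)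
    (hU : ∀ p q, j ≤ p → q ≤ k →
      ‖∫ ω, ∏ i ∈ Icc p q, U i ω ∂μ‖ ≤ ∏ i ∈ Icc p q, d i) :
    ‖heinrichE μ U j k‖ ≤ 2 ^ (k - j) * ∏ i ∈ Icc j k, d i := by
  induction k using Nat.strong_induction_on with
  | _ k ih =>
  have hterm : ∀ l ∈ Ico j k,
      ‖heinrichE μ U j l * ∫ ω, ∏ i ∈ Icc (l + 1) k, U i ω ∂μ‖ ≤
        2 ^ (l - j) * ∏ i ∈ Icc j k, d i := by
    intro l hl
    obtain ⟨hjl, hlk⟩ := mem_Ico.mp hl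
    have ihl := ih l hlk fun p q hp hq => hU p q hp (hq.trans hlk.le)
    calc ‖heinrichE μ U j l * ∫ ω, ∏ i ∈ Icc (l + 1) k, U i ω ∂μ‖
        ≤ (2 ^ (l - j) * ∏ i ∈ Icc j l, d i) * ∏ i ∈ Icc (l + 1) k, d i := by
          rw [norm_mul]
          exact mul_le_mul ihl (hU (l + 1) k (by omega) le_rfl) (norm_nonneg _)
            ((norm_nonneg _).trans ihl)
      _ = 2 ^ (l - j) * ∏ i ∈ Icc j k, d i := by
          simp only [mul_assoc, ← Ico_add_one_right_eq_Icc]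
          rw [prod_Ico_consecutive _ (by omega) (by omega)]
  have hgeom : ∑ l ∈ Ico j k, (2 : ℝ) ^ (l - j) = 2 ^ (k - j) - 1 := by
    rw [sum_Ico_eq_sum_range]
    simp_rw [Nat.add_sub_cancel_left]
    rw [geom_sum_eq (by norm_num)]
    norm_num
  rw [heinrichE]
  calc _ ≤ ‖∫ ω, ∏ i ∈ Icc j k, U i ω ∂μ‖ + ∑ l ∈ Ico j k,
        ‖heinrichE μ U j l * ∫ ω, ∏ i ∈ Icc (l + 1) k, U i ω ∂μ‖ := by
        refine (norm_sub_le _ _).trans (add_le_add_right ?_ _)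
        rw [← sum_attach (Ico j k)]
        exact norm_sum_le _ _
    _ ≤ ∏ i ∈ Icc j k, d i + ∑ l ∈ Ico j k, 2 ^ (l - j) * ∏ i ∈ Icc j k, d i :=
        add_le_add (hU j k le_rfl le_rfl) (sum_le_sum hterm)
    _ = 2 ^ (k - j) * ∏ i ∈ Icc j k, d i := by rw [← sum_mul, hgeom]; ring

/-- Heinrich's majorant for `‖φ_k(u) - 1‖`: the constant `21 / 10` dominates `2 / (24 / 25)`,
the growth rate `2` of the cumulant bound divided by the lower bound `24 / 25` on `‖φ_i(u)‖`. -/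
noncomputable def heinrichMajorant (e d : ℕ → ℝ) (k : ℕ) : ℝ :=
  e k + ∑ j ∈ Ico 1 k, (21 / 10 : ℝ) ^ (k - j) * ∏ i ∈ Icc j k, d i

lemma heinrichMajorant_le {e d : ℕ → ℝ} {k : ℕ} (he : e k ≤ 1 / 200) (hd0 : ∀ i, 0 ≤ d i)
    (hd : ∀ i ∈ Icc 1 k, d i ≤ 1 / 10) : heinrichMajorant e d k ≤ 1 / 25 := by
  have hterm : ∀ j ∈ Ico 1 k, (21 / 10 : ℝ) ^ (k - j) * ∏ i ∈ Icc j k, d i ≤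
      1 / 10 * (21 / 100) ^ (k - j) := by
    intro j hj
    have hj := mem_Ico.mp hj
    have hdj := hd j (mem_Icc.mpr ⟨hj.1, hj.2.le⟩)
    have hdk := hd k (mem_Icc.mpr ⟨hj.1.trans hj.2.le, le_rfl⟩)
    refine (pow_mul_prod_Icc_le_sq_add_sq hd0 hj.2 fun i hi => hd i ?_).trans ?_
    · simp only [mem_Ioo, mem_Icc] at hi ⊢; omega
    · have hsq : d j ^ 2 + d k ^ 2 ≤ 2 / 100 := by nlinarith [hd0 j, hd0 k]
      have hpow : (0 : ℝ) ≤ 5 * (21 / 100) ^ (k - j) := by positivity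
      nlinarith [mul_le_mul_of_nonneg_left hsq hpow]
  have hgeom : ∑ j ∈ Ico 1 k, (21 / 100 : ℝ) ^ (k - j) ≤ 21 / 79 := by
    refine (sum_pow_le_div_one_sub (by norm_num) (by norm_num)
      (fun i hi l hl h => by simp at hi hl; omega) fun j hj => by simp at hj; omega).trans ?_
    norm_num
  calc heinrichMajorant e d k ≤ 1 / 200 + ∑ j ∈ Ico 1 k, 1 / 10 * (21 / 100 : ℝ) ^ (k - j) :=
        add_le_add he (sum_le_sum hterm)
    _ ≤ 1 / 25 := by rw [← mul_sum]; linarith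

lemma sum_heinrichMajorant_le {e d : ℕ → ℝ} {n : ℕ} (hd0 : ∀ i, 0 ≤ d i)
    (hd : ∀ i ∈ Icc 1 n, d i ≤ 1 / 10) :
    ∑ k ∈ Icc 1 n, heinrichMajorant e d k ≤ ∑ k ∈ Icc 1 n, (e k + 210 / 79 * d k ^ 2) := by
  have hterm : ∀ k ∈ Icc 1 n, ∀ j ∈ Ico 1 k,
      (21 / 10 : ℝ) ^ (k - j) * ∏ i ∈ Icc j k, d i ≤
        5 * ((21 / 100 : ℝ) ^ (k - j) * (d j ^ 2 + d k ^ 2)) := by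
    intro k hk j hj
    rw [← mul_assoc]
    refine pow_mul_prod_Icc_le_sq_add_sq hd0 (mem_Ico.mp hj).2 fun i hi => hd i ?_
    simp only [mem_Ioo, mem_Icc, mem_Ico] at hi hj hk ⊢; omega
  have hdouble := sum_sum_pow_sub_mul_add_le (ρ := 21 / 100) (by norm_num) (by norm_num)
    (fun i => sq_nonneg (d i)) n
  calc ∑ k ∈ Icc 1 n, heinrichMajorant e d k
      ≤ ∑ k ∈ Icc 1 n,
          (e k + 5 * ∑ j ∈ Ico 1 k, (21 / 100 : ℝ) ^ (k - j) * (d j ^ 2 + d k ^ 2)) := by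
        refine sum_le_sum fun k hk => add_le_add_right ?_ _
        rw [mul_sum]
        exact sum_le_sum (hterm k hk)
    _ ≤ ∑ k ∈ Icc 1 n, (e k + 210 / 79 * d k ^ 2) := by
        rw [sum_add_distrib, sum_add_distrib, ← mul_sum, ← mul_sum]
        norm_num at hdouble ⊢
        linarith

lemma norm_div_prod_le_of_norm_le {z : ℂ} {w : ℕ → ℂ} {P : ℝ} {j k : ℕ}
    (hz : ‖z‖ ≤ 2 ^ (k + 1 - j) * P) (hw : ∀ i ∈ Icc j k, 24 / 25 ≤ ‖w i‖) :
    ‖z / ∏ i ∈ Icc j k, w i‖ ≤ (21 / 10) ^ (k + 1 - j) * P := by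
  have hden : (24 / 25 : ℝ) ^ (k + 1 - j) ≤ ‖∏ i ∈ Icc j k, w i‖ := by
    rw [norm_prod, ← Nat.card_Icc, ← prod_const]
    exact prod_le_prod (fun _ _ => by norm_num) hw
  have hP : 0 ≤ P := nonneg_of_mul_nonneg_right ((norm_nonneg _).trans hz) (by positivity)
  rw [norm_div, div_le_iff₀ ((by positivity : (0 : ℝ) < _).trans_le hden)]
  calc ‖z‖ ≤ 2 ^ (k + 1 - j) * P := hz
    _ ≤ (21 / 10 * (24 / 25)) ^ (k + 1 - j) * P := by gcongr; norm_num
    _ ≤ (21 / 10) ^ (k + 1 - j) * P * ‖∏ i ∈ Icc j k, w i‖ := by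
        rw [mul_pow, mul_right_comm]
        gcongr

lemma norm_heinrichPhi_sub_one_le [IsProbabilityMeasure μ] {X : ℕ → Ω → ℕ} {u : ℂ} {n : ℕ}
    {e d : ℕ → ℝ} (hint : Integrable (fun ω => Complex.exp (u * X 1 ω)) μ)
    (he : ∀ k ∈ Icc 1 n, ‖∫ ω, (Complex.exp (u * X k ω) - 1) ∂μ‖ ≤ e k)
    (hE : ∀ j k, 1 ≤ j → k ≤ n →
      ‖heinrichE μ (fun i ω => Complex.exp (u * X i ω) - 1) j k‖ ≤
        2 ^ (k - j) * ∏ i ∈ Icc j k, d i)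
    (hsmall : ∀ k ∈ Icc 1 n, heinrichMajorant e d k ≤ 1 / 25) {k : ℕ} (hk : k ∈ Icc 1 n) :
    ‖heinrichPhi μ X u k - 1‖ ≤ heinrichMajorant e d k := by
  induction k using Nat.strong_induction_on with
  | _ k ih =>
  obtain ⟨hk1, hkn⟩ := mem_Icc.mp hk
  rcases eq_or_ne k 1 with rfl | hk1'
  · have hφ : heinrichPhi μ X u 1 - 1 = ∫ ω, (Complex.exp (u * X 1 ω) - 1) ∂μ := by
      rw [heinrichPhi, integral_sub hint (integrable_const 1)]
      simp
    simpa [hφ, heinrichMajorant] using he 1 hk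
  obtain ⟨m, rfl⟩ : ∃ m, k = m + 2 := ⟨k - 2, by omega⟩
  have hlow : ∀ i ∈ Icc 1 (m + 1), (24 / 25 : ℝ) ≤ ‖heinrichPhi μ X u i‖ := by
    intro i hi
    have hi' : i ∈ Icc 1 n := by simp only [mem_Icc] at hi ⊢; omega
    have := (ih i (by simp at hi; omega) hi').trans (hsmall i hi')
    have := norm_sub_norm_le (1 : ℂ) (1 - heinrichPhi μ X u i)
    rw [norm_one, sub_sub_cancel, norm_sub_rev] at this
    linarith
  have hterm : ∀ j ∈ Icc 1 (m + 1),
      ‖heinrichE μ (fun i ω => Complex.exp (u * X i ω) - 1) j (m + 2) /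
        ∏ i ∈ Icc j (m + 1), heinrichPhi μ X u i‖ ≤
          (21 / 10 : ℝ) ^ (m + 2 - j) * ∏ i ∈ Icc j (m + 2), d i := fun j hj =>
    norm_div_prod_le_of_norm_le (hE j (m + 2) (mem_Icc.mp hj).1 hkn) fun i hi =>
      hlow i (by simp only [mem_Icc] at hi hj ⊢; omega)
  rw [heinrichPhi, add_assoc, add_sub_cancel_left, heinrichMajorant,
    show Ico 1 (m + 2) = Icc 1 (m + 1) from Ico_add_one_right_eq_Icc 1 (m + 1)]
  simp only [prod_attach]
  refine (norm_add_le _ _).trans (add_le_add (he _ hk) ((norm_sum_le _ _).trans ?_))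
  exact (sum_le_sum fun j (_ : j ∈ (Icc 1 (m + 1)).attach) => hterm j.1 j.2).trans_eq
    (sum_attach (Icc 1 (m + 1)) fun j => (21 / 10 : ℝ) ^ (m + 2 - j) * ∏ i ∈ Icc j (m + 2), d i)

lemma heinrich_log_sum_le_of_bounds [IsProbabilityMeasure μ] {X : ℕ → Ω → ℕ} {u : ℂ} {n : ℕ}
    {e d : ℕ → ℝ} (hint : ∀ k ∈ Icc 1 n, Integrable (fun ω => Complex.exp (u * X k ω)) μ)
    (he : ∀ k ∈ Icc 1 n, ‖∫ ω, (Complex.exp (u * X k ω) - 1) ∂μ‖ ≤ e k)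
    (he_le : ∀ k ∈ Icc 1 n, e k ≤ 1 / 200)
    (hE : ∀ j k, 1 ≤ j → k ≤ n →
      ‖heinrichE μ (fun i ω => Complex.exp (u * X i ω) - 1) j k‖ ≤
        2 ^ (k - j) * ∏ i ∈ Icc j k, d i)
    (hd0 : ∀ i, 0 ≤ d i) (hd : ∀ i ∈ Icc 1 n, d i ≤ 1 / 10) :
    (∀ k ∈ Icc 1 n, Summable fun j : ℕ =>
      ‖(-1 : ℂ) ^ j * (heinrichPhi μ X u k - 1) ^ (j + 1) / (j + 1)‖) ∧
    ‖∑ k ∈ Icc 1 n, ∑' j : ℕ, (-1 : ℂ) ^ j * (heinrichPhi μ X u k - 1) ^ (j + 1) / (j + 1)‖ ≤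
      25 / 24 * ∑ k ∈ Icc 1 n, (e k + 210 / 79 * d k ^ 2) := by
  have hmaj : ∀ k ∈ Icc 1 n, heinrichMajorant e d k ≤ 1 / 25 := fun k hk =>
    heinrichMajorant_le (he_le k hk) hd0 fun i hi => hd i (by simp at hi hk ⊢; omega)
  have hφ : ∀ k ∈ Icc 1 n, ‖heinrichPhi μ X u k - 1‖ ≤ heinrichMajorant e d k := fun k hk =>
    norm_heinrichPhi_sub_one_le (hint 1 (by simp only [mem_Icc] at hk ⊢; omega)) he hE hmaj hk
  have hφ_le : ∀ k ∈ Icc 1 n, ‖heinrichPhi μ X u k - 1‖ ≤ 1 / 25 := fun k hk =>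
    (hφ k hk).trans (hmaj k hk)
  refine ⟨fun k hk => summable_norm_logSeries ((hφ_le k hk).trans_lt (by norm_num)), ?_⟩
  calc _ ≤ ∑ k ∈ Icc 1 n,
        ‖∑' j : ℕ, (-1 : ℂ) ^ j * (heinrichPhi μ X u k - 1) ^ (j + 1) / (j + 1)‖ :=
        norm_sum_le _ _
    _ ≤ ∑ k ∈ Icc 1 n, 25 / 24 * heinrichMajorant e d k := by
        refine sum_le_sum fun k hk =>
          (norm_tsum_logSeries_le ((hφ_le k hk).trans_lt (by norm_num))).trans ?_
        have := hφ_le k hk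
        rw [div_le_iff₀ (by linarith)]
        nlinarith [hφ k hk, norm_nonneg (heinrichPhi μ X u k - 1)]
    _ ≤ 25 / 24 * ∑ k ∈ Icc 1 n, (e k + 210 / 79 * d k ^ 2) := by
        rw [← mul_sum]
        exact mul_le_mul_of_nonneg_left (sum_heinrichMajorant_le hd0 hd) (by norm_num)

end Heinrich

namespace OneDependent

variable {Ω : Type*} [MeasurableSpace Ω] {μ : Measure Ω} [IsProbabilityMeasure μ]
  {n : ℕ} {X : ℕ → Ω → ℕ} {u : ℂ} {b C : ℝ} {d : ℕ → ℝ}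

lemma integral_prod_eq_prod_integral (hdep : OneDependent μ n X) (hX : ∀ i, Measurable (X i))
    (G : ℕ → ℕ → ℝ) {S : Finset ℕ} (hS : S ⊆ Icc 1 n)
    (hsep : (S : Set ℕ).Pairwise fun i j => i + 1 ≠ j) :
    ∫ ω, ∏ i ∈ S, G i (X i ω) ∂μ = ∏ i ∈ S, ∫ ω, G i (X i ω) ∂μ := by
  induction S using Finset.induction_on_max with
  | empty => simp
  | insert M s hlt ih =>
    rw [insert_subset_iff] at hS
    rw [coe_insert, Set.pairwise_insert] at hsep
    have hMs : M ∉ s := fun h => lt_irrefl _ (hlt M h)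
    simp only [prod_insert hMs]
    rw [← ih hS.2 hsep.1]
    rcases s.eq_empty_or_nonempty with rfl | ⟨i₀, hi₀⟩
    · simp
    have hgap : ∀ i ∈ s, 1 ≤ i ∧ i ≤ M - 2 := fun i hi => by
      have := (hsep.2 i hi (hlt i hi).ne').2
      have := (mem_Icc.mp (hS.2 hi)).1
      have := hlt i hi
      omega
    have hM : 1 ≤ M - 2 := le_trans (hgap i₀ hi₀).1 (hgap i₀ hi₀).2
    have hind := hdep (M - 2) hM (by have := (mem_Icc.mp hS.1).2; omega)
    rw [show M - 2 + 2 = M by omega] at hind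
    have hmeas : ∀ {T : Finset ℕ} {i : ℕ}, i ∈ T →
        Measurable[⨆ i ∈ T, MeasurableSpace.comap (X i) ⊤] (fun ω => G i (X i ω)) :=
      fun hi => measurable_from_top.comp <| measurable_iff_comap_le.mpr <|
        le_biSup (f := fun i => MeasurableSpace.comap (X i) ⊤) hi
    have hindep : IndepFun (fun ω => G M (X M ω)) (fun ω => ∏ i ∈ s, G i (X i ω)) μ := by
      rw [IndepFun_iff_Indep]
      refine indep_of_indep_of_le_left (indep_of_indep_of_le_right hind.symm ?_) ?_
      · exact measurable_iff_comap_le.mp <| Finset.measurable_prod _ fun i hi =>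
          hmeas (mem_Icc.mpr (hgap i hi))
      · exact measurable_iff_comap_le.mp <| hmeas (mem_Icc.mpr ⟨le_rfl, (mem_Icc.mp hS.1).2⟩)
    exact hindep.integral_mul_eq_mul_integral
      (measurable_from_top.comp (hX M)).aestronglyMeasurable
      (Finset.measurable_prod _ fun i _ => measurable_from_top.comp (hX i)).aestronglyMeasurable

lemma norm_integral_prod_cexp_sub_one_le (hdep : OneDependent μ n X)
    (hX : ∀ i, Measurable (X i)) (hXC : ∀ i ∈ Icc 1 n, ∀ᵐ ω ∂μ, (X i ω : ℝ) ≤ C)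
    (hb0 : 0 ≤ b) (hb : ∀ m : ℕ, (m : ℝ) ≤ C → ‖Complex.exp (u * m) - 1‖ ≤ b * m)
    (hd0 : ∀ i, 0 ≤ d i) (hd : ∀ i ∈ Icc 1 n, b ^ 2 * C * ∫ ω, (X i ω : ℝ) ∂μ ≤ d i ^ 2)
    {p q : ℕ} (hp : 1 ≤ p) (hq : q ≤ n) :
    ‖∫ ω, ∏ i ∈ Icc p q, (Complex.exp (u * X i ω) - 1) ∂μ‖ ≤ ∏ i ∈ Icc p q, d i := by
  have hT : Icc p q ⊆ Icc 1 n := Icc_subset_Icc hp hq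
  refine (norm_integral_le_integral_norm _).trans ?_
  simp_rw [norm_prod]
  refine integral_prod_le_prod_of_integral_prod_sq_le (b * C)
    (fun i _ => ((measurable_from_nat (f := fun m : ℕ => ‖Complex.exp (u * m) - 1‖)).comp
      (hX i)).aestronglyMeasurable) (fun _ _ => norm_nonneg _)
    (fun i hi => (hXC i (hT hi)).mono fun ω h => (hb _ h).trans (by gcongr)) hd0 ?_
  intro S hS hsep
  rw [hdep.integral_prod_eq_prod_integral hX (fun _ m => ‖Complex.exp (u * m) - 1‖ ^ 2)
    (hS.trans hT) hsep]
  exact prod_le_prod (fun _ _ => integral_nonneg fun _ => by positivity) fun i hi =>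
    (integral_norm_cexp_mul_natCast_sub_one_sq_le (hX i) (hXC i (hT (hS hi))) hb).trans
      (hd i (hT (hS hi)))

lemma norm_heinrichE_cexp_sub_one_le (hdep : OneDependent μ n X)
    (hX : ∀ i, Measurable (X i)) (hXC : ∀ i ∈ Icc 1 n, ∀ᵐ ω ∂μ, (X i ω : ℝ) ≤ C)
    (hb0 : 0 ≤ b) (hb : ∀ m : ℕ, (m : ℝ) ≤ C → ‖Complex.exp (u * m) - 1‖ ≤ b * m)
    (hd0 : ∀ i, 0 ≤ d i) (hd : ∀ i ∈ Icc 1 n, b ^ 2 * C * ∫ ω, (X i ω : ℝ) ∂μ ≤ d i ^ 2)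
    {j k : ℕ} (hj : 1 ≤ j) (hk : k ≤ n) :
    ‖heinrichE μ (fun i ω => Complex.exp (u * X i ω) - 1) j k‖ ≤
      2 ^ (k - j) * ∏ i ∈ Icc j k, d i :=
  norm_heinrichE_le _ d j k fun _ _ hp hq =>
    hdep.norm_integral_prod_cexp_sub_one_le hX hXC hb0 hb hd0 hd (hj.trans hp) (hq.trans hk)

end OneDependent

lemma facMoment_one {Ω : Type*} [MeasurableSpace Ω] (μ : Measure Ω) (X : Ω → ℕ) :
    facMoment μ X 1 = ∫ ω, (X ω : ℝ) ∂μ := by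
  simp [facMoment]

/-- Lemma 5, estimate (31) (first part): absolute convergence of the logarithmic
series `A(u) = Σ_{k=1}^n Σ_{j=1}^∞ (-1)^{j+1}(φ_k(u)-1)^j / j` and `|A(u)| ≤ 4a²Γ₁`. -/
theorem heinrich_log_sum_bound (C0 h t : ℝ) (hC0 : 1 ≤ C0) (hh : 0 ≤ h)
    (u : ℂ) (hu : u = t * Complex.I + h)
    (Ω : Type*) [MeasurableSpace Ω] (μ : Measure Ω) [IsProbabilityMeasure μ]
    (n : ℕ) (X : ℕ → Ω → ℕ) (hX : ∀ i, Measurable (X i))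
    (hbd : ∀ i, 1 ≤ i → i ≤ n → ∀ᵐ ω ∂μ, ((X i ω : ℝ)) ≤ C0)
    (hdep : OneDependent μ n X)
    (a Γ₁ : ℝ) (ha : a = Real.exp (h * C0) * (2 + h) * Real.sqrt C0)
    (hΓ : Γ₁ = ∑ j ∈ Finset.Icc 1 n, facMoment μ (X j) 1)
    (hsmall : ∀ j ∈ Finset.Icc 1 n, a ^ 2 * facMoment μ (X j) 1 ≤ 1 / 100) :
    (∀ k ∈ Finset.Icc 1 n,
      Summable (fun j : ℕ =>
        ‖(-1 : ℂ) ^ j * (heinrichPhi μ X u k - 1) ^ (j + 1) / (j + 1)‖)) ∧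
    ‖∑ k ∈ Finset.Icc 1 n,
        ∑' j : ℕ, (-1 : ℂ) ^ j * (heinrichPhi μ X u k - 1) ^ (j + 1) / (j + 1)‖ ≤
      4 * a ^ 2 * Γ₁ := by
  subst hu
  set b := Real.exp (h * C0) * (2 + h)
  have ha2 : a ^ 2 = b ^ 2 * C0 := by rw [ha, mul_pow, Real.sq_sqrt (by linarith)]
  have h2b : 2 * b ≤ a ^ 2 := by
    have hb : 2 ≤ b := by nlinarith [Real.one_le_exp (mul_nonneg hh (by linarith : 0 ≤ C0))]
    rw [ha2]
    nlinarith
  simp only [facMoment_one] at hΓ hsmall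
  set ν : ℕ → ℝ := fun i => ∫ ω, (X i ω : ℝ) ∂μ
  have hν0 : ∀ i, 0 ≤ ν i := fun i => integral_nonneg fun _ => Nat.cast_nonneg _
  set d : ℕ → ℝ := fun i => √(a ^ 2 * ν i)
  have hd2 : ∀ i, d i ^ 2 = a ^ 2 * ν i := fun i => Real.sq_sqrt (by positivity)
  have hXC : ∀ i ∈ Icc 1 n, ∀ᵐ ω ∂μ, (X i ω : ℝ) ≤ C0 := fun i hi =>
    hbd i (mem_Icc.mp hi).1 (mem_Icc.mp hi).2
  have hinc : ∀ m : ℕ, (m : ℝ) ≤ C0 → ‖Complex.exp ((t * Complex.I + h) * m) - 1‖ ≤ b * m :=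
    fun _ => norm_cexp_mul_natCast_sub_one_le hh
  obtain ⟨hsum, hle⟩ := heinrich_log_sum_le_of_bounds (e := fun k => b * ν k) (d := d)
    (fun k hk => integrable_cexp_mul_natCast (hX k) (hXC k hk) (by positivity) hinc)
    (fun k hk => (norm_integral_le_integral_norm _).trans
      (integral_norm_cexp_mul_natCast_sub_one_le (hX k) (hXC k hk) hinc))
    (fun k hk => by nlinarith [hsmall k hk, hν0 k])
    (fun _ _ => hdep.norm_heinrichE_cexp_sub_one_le hX hXC (by positivity) hinc
      (fun _ => Real.sqrt_nonneg _) fun i _ => by rw [hd2, ha2])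
    (fun _ => Real.sqrt_nonneg _)
    (fun i hi => (Real.sqrt_le_left (by norm_num)).mpr (by linarith [hsmall i hi]))
  refine ⟨hsum, hle.trans ?_⟩
  rw [hΓ, mul_sum, mul_sum]
  refine sum_le_sum fun k _ => ?_
  rw [hd2]
  nlinarith [mul_le_mul_of_nonneg_right h2b (hν0 k), mul_nonneg (sq_nonneg a) (hν0 k)]
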